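/- arXiv:2412.00712 — 6 statements merged into one kernel-verified Lean document; each statement's English description precedes it below -/
import Mathlib

section
/- For every a ∈ E* with a ≠ 0 and every x ∈ E, there exists a unique α ∈ H_x such that (σ_x⁻¹ * α * σ_x) 1 = a. -/
/-- For every `a ∈ E*` with `a ≠ 0` and every `x ∈ E`, there exists a
unique `α ∈ H_x` such that `(σ_x⁻¹ * α * σ_x) 1 = a`. Here `0` and `1` are two fixed
distinct elements `e0, e1` of `E`, `H_x` is the stabilizer of `x` in the Frobenius
group `G`, `E* = {e0} ∪ {h e1 : h ∈ H_{e0}}`, and `σ` is a fixed section. -/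
theorem stmt_1 {E : Type*} [Fintype E] [Nonempty E]
    (G : Subgroup (Equiv.Perm E))
    (htrans : ∀ x y : E, ∃ g ∈ G, g x = y)
    (hirreg : ∃ g ∈ G, g ≠ 1 ∧ ∃ x : E, g x = x)
    (hfrob : ∀ g ∈ G, g ≠ 1 → ∀ x y : E, g x = x → g y = y → x = y)
    (e0 e1 : E) (h01 : e0 ≠ e1)
    (σ : E → G) (hσ0 : σ e0 = 1) (hσ : ∀ x : E, (σ x : Equiv.Perm E) e0 = x)
    (a : E)
    (haE : a = e0 ∨ ∃ h : G, (h : Equiv.Perm E) e0 = e0 ∧ (h : Equiv.Perm E) e1 = a)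
    (ha0 : a ≠ e0) (x : E) :
    ∃! α : G, (α : Equiv.Perm E) x = x ∧
      (((σ x)⁻¹ * α * σ x : G) : Equiv.Perm E) e1 = a := by
  obtain ⟨h, hh0, hh1⟩ := haE.resolve_left ha0
  have hx0 : ((σ x : Equiv.Perm E))⁻¹ x = e0 := by
    rw [Equiv.Perm.inv_eq_iff_eq]
    exact (hσ x).symm
  refine ⟨σ x * h * (σ x)⁻¹, ⟨?_, ?_⟩, ?_⟩
  · simp only [Subgroup.coe_mul, InvMemClass.coe_inv, Equiv.Perm.mul_apply]
    rw [hx0, hh0, hσ x]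
  · have heq : (σ x)⁻¹ * (σ x * h * (σ x)⁻¹) * σ x = h := by group
    rw [heq]; exact hh1
  · rintro α ⟨hαx, hα1⟩
    set g : G := h⁻¹ * ((σ x)⁻¹ * α * σ x) with hg
    have hge1 : (g : Equiv.Perm E) e1 = e1 := by
      rw [hg]
      simp only [Subgroup.coe_mul, InvMemClass.coe_inv, Equiv.Perm.mul_apply] at hα1 ⊢
      rw [hα1, ← hh1]
      simp
    have hge0 : (g : Equiv.Perm E) e0 = e0 := by
      rw [hg]
      simp only [Subgroup.coe_mul, InvMemClass.coe_inv, Equiv.Perm.mul_apply]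
      rw [hσ x, hαx, hx0, Equiv.Perm.inv_eq_iff_eq]
      exact hh0.symm
    have hg1 : g = 1 := by
      by_contra hne
      refine h01 (hfrob g (SetLike.coe_mem g) ?_ e0 e1 hge0 hge1)
      intro e
      exact hne (by exact_mod_cast e)
    have hfin : h = (σ x)⁻¹ * α * σ x := inv_mul_eq_one.mp (hg.symm.trans hg1)
    rw [hfin]
    group
end

section
/- Let x ∈ E and let a, b ∈ E* with a ≠ 0 and b ≠ 0. If α, β ∈ H_x satisfy (σ_x⁻¹ * α * σ_x) 1 = a and (σ_x⁻¹ * β * σ_x) 1 = b, then the product α * β lies in H_x, the element c := (σ_x⁻¹ * α * σ_x) b lies in E* and c ≠ 0, and (σ_x⁻¹ * (α * β) * σ_x) 1 = c. -/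
/-- Let `x ∈ E`, and `a, b ∈ E*` nonzero. If `α, β ∈ H_x` satisfy
`(σ_x⁻¹ * α * σ_x) 1 = a` and `(σ_x⁻¹ * β * σ_x) 1 = b`, then `α * β ∈ H_x`, the
element `c := (σ_x⁻¹ * α * σ_x) b` lies in `E*` with `c ≠ 0`, and
`(σ_x⁻¹ * (α * β) * σ_x) 1 = c`. -/
theorem stmt_2 {E : Type*} [Fintype E] [Nonempty E]
    (G : Subgroup (Equiv.Perm E))
    (htrans : ∀ x y : E, ∃ g ∈ G, g x = y)
    (hirreg : ∃ g ∈ G, g ≠ 1 ∧ ∃ x : E, g x = x)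
    (hfrob : ∀ g ∈ G, g ≠ 1 → ∀ x y : E, g x = x → g y = y → x = y)
    (e0 e1 : E) (h01 : e0 ≠ e1)
    (σ : E → G) (hσ0 : σ e0 = 1) (hσ : ∀ x : E, (σ x : Equiv.Perm E) e0 = x)
    (x a b : E)
    (haE : a = e0 ∨ ∃ h : G, (h : Equiv.Perm E) e0 = e0 ∧ (h : Equiv.Perm E) e1 = a)
    (hbE : b = e0 ∨ ∃ h : G, (h : Equiv.Perm E) e0 = e0 ∧ (h : Equiv.Perm E) e1 = b)
    (ha0 : a ≠ e0) (hb0 : b ≠ e0)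
    (α β : G)
    (hαst : (α : Equiv.Perm E) x = x)
    (hβst : (β : Equiv.Perm E) x = x)
    (hαa : (((σ x)⁻¹ * α * σ x : G) : Equiv.Perm E) e1 = a)
    (hβb : (((σ x)⁻¹ * β * σ x : G) : Equiv.Perm E) e1 = b) :
    ((α * β : G) : Equiv.Perm E) x = x ∧
    ((((σ x)⁻¹ * α * σ x : G) : Equiv.Perm E) b = e0 ∨
      ∃ h : G, (h : Equiv.Perm E) e0 = e0 ∧
        (h : Equiv.Perm E) e1 = (((σ x)⁻¹ * α * σ x : G) : Equiv.Perm E) b) ∧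
    (((σ x)⁻¹ * α * σ x : G) : Equiv.Perm E) b ≠ e0 ∧
    (((σ x)⁻¹ * (α * β) * σ x : G) : Equiv.Perm E) e1 =
      (((σ x)⁻¹ * α * σ x : G) : Equiv.Perm E) b := by
  obtain hβ | ⟨h, hh0, hh1⟩ := hbE
  · exact absurd hβ hb0
  · have hinv : ((σ x : Equiv.Perm E))⁻¹ x = e0 := by
      exact Equiv.Perm.inv_eq_iff_eq.mpr (hσ x).symm
    have hα' : (((σ x)⁻¹ * α * σ x : G) : Equiv.Perm E) e0 = e0 := by
      simp [Equiv.Perm.mul_apply, hσ, hαst, hinv]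
    refine ⟨by simp [Equiv.Perm.mul_apply, hαst, hβst], ?_, ?_, ?_⟩
    · right
      refine ⟨(σ x)⁻¹ * α * σ x * h, ?_, ?_⟩
      · simp only [Subgroup.coe_mul, Equiv.Perm.mul_apply, hh0]
        simpa [Equiv.Perm.mul_apply] using hα'
      · simp [Equiv.Perm.mul_apply, hh1]
    · intro hc
      apply hb0
      have := hα'.trans hc.symm
      exact ((((σ x)⁻¹ * α * σ x : G) : Equiv.Perm E).injective this.symm)
    · have : (((σ x)⁻¹ * (α * β) * σ x : G) : Equiv.Perm E) e1
          = (((σ x)⁻¹ * α * σ x : G) : Equiv.Perm E)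
            ((((σ x)⁻¹ * β * σ x : G) : Equiv.Perm E) e1) := by
        simp [Equiv.Perm.mul_apply]
      rw [this, hβb]
end

section
/- The following hold: (1) for all a, b ∈ E* with a ≠ 0 and b ≠ 0 and all x, y ∈ E, (x, a, (x, b, y)) = (x, (0,a,b), y); (2) the map from H_0 to E* \ {0} sending h to h 1 is a bijection, and for all h, h' ∈ H_0 one has (h * h') 1 = (0, h 1, h' 1). Consequently E* \ {0}, equipped with the operation a ∘ b := (0,a,b) and identity element 1, is a group isomorphic to H_0. -/
/-- (1) `(x, a, (x, b, y)) = (x, (0,a,b), y)` for nonzero `a, b ∈ E*`;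
(2) `h ↦ h 1` is a bijection from `H_0` onto `E* \ {0}` with `(h * h') 1 = (0, h 1, h' 1)`;
consequently `E* \ {0}` with the operation `a ∘ b := (0,a,b)` and identity `1` is a
group isomorphic to `H_0` (the group axioms are stated explicitly). -/
theorem stmt_5 {E : Type*} [Fintype E] [Nonempty E]
    (G : Subgroup (Equiv.Perm E))
    (htrans : ∀ x y : E, ∃ g ∈ G, g x = y)
    (hirreg : ∃ g ∈ G, g ≠ 1 ∧ ∃ x : E, g x = x)
    (hfrob : ∀ g ∈ G, g ≠ 1 → ∀ x y : E, g x = x → g y = y → x = y)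
    (e0 e1 : E) (h01 : e0 ≠ e1)
    (σ : E → G) (hσ0 : σ e0 = 1) (hσ : ∀ x : E, (σ x : Equiv.Perm E) e0 = x)
    (f : E → E → E → E)
    (hf0 : ∀ x y : E, f x e0 y = x)
    (hf1 : ∀ x y : E, f x e1 y = y)
    (hff : ∀ a : E,
      (a = e0 ∨ ∃ h : G, (h : Equiv.Perm E) e0 = e0 ∧ (h : Equiv.Perm E) e1 = a) →
      a ≠ e0 → a ≠ e1 → ∀ x y : E, ∃ α : G, (α : Equiv.Perm E) x = x ∧
        (((σ x)⁻¹ * α * σ x : G) : Equiv.Perm E) e1 = a ∧ f x a y = (α : Equiv.Perm E) y) :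
    -- (1)
    (∀ a b : E,
      (a = e0 ∨ ∃ h : G, (h : Equiv.Perm E) e0 = e0 ∧ (h : Equiv.Perm E) e1 = a) →
      (b = e0 ∨ ∃ h : G, (h : Equiv.Perm E) e0 = e0 ∧ (h : Equiv.Perm E) e1 = b) →
      a ≠ e0 → b ≠ e0 → ∀ x y : E, f x a (f x b y) = f x (f e0 a b) y) ∧
    -- (2) the map h ↦ h 1 is a bijection from H_0 onto E* \ {0} ...
    Set.BijOn (fun h : G => (h : Equiv.Perm E) e1)
      {h : G | (h : Equiv.Perm E) e0 = e0}
      (({e0} ∪ {y : E | ∃ h : G, (h : Equiv.Perm E) e0 = e0 ∧ (h : Equiv.Perm E) e1 = y}) \ {e0}) ∧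
    -- ... which is multiplicative: (h * h') 1 = (0, h 1, h' 1)
    (∀ h h' : G, (h : Equiv.Perm E) e0 = e0 → (h' : Equiv.Perm E) e0 = e0 →
      ((h * h' : G) : Equiv.Perm E) e1 = f e0 ((h : Equiv.Perm E) e1) ((h' : Equiv.Perm E) e1)) ∧
    -- consequently E* \ {0} with a ∘ b := (0,a,b) and identity 1 is a group:
    (∀ a ∈ (({e0} ∪ {y : E | ∃ h : G, (h : Equiv.Perm E) e0 = e0 ∧ (h : Equiv.Perm E) e1 = y}) \ {e0}),
     ∀ b ∈ (({e0} ∪ {y : E | ∃ h : G, (h : Equiv.Perm E) e0 = e0 ∧ (h : Equiv.Perm E) e1 = y}) \ {e0}),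
      f e0 a b ∈ (({e0} ∪ {y : E | ∃ h : G, (h : Equiv.Perm E) e0 = e0 ∧ (h : Equiv.Perm E) e1 = y}) \ {e0})) ∧
    (∀ a ∈ (({e0} ∪ {y : E | ∃ h : G, (h : Equiv.Perm E) e0 = e0 ∧ (h : Equiv.Perm E) e1 = y}) \ {e0}),
     ∀ b ∈ (({e0} ∪ {y : E | ∃ h : G, (h : Equiv.Perm E) e0 = e0 ∧ (h : Equiv.Perm E) e1 = y}) \ {e0}),
     ∀ c ∈ (({e0} ∪ {y : E | ∃ h : G, (h : Equiv.Perm E) e0 = e0 ∧ (h : Equiv.Perm E) e1 = y}) \ {e0}),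
      f e0 (f e0 a b) c = f e0 a (f e0 b c)) ∧
    e1 ∈ (({e0} ∪ {y : E | ∃ h : G, (h : Equiv.Perm E) e0 = e0 ∧ (h : Equiv.Perm E) e1 = y}) \ {e0}) ∧
    (∀ a ∈ (({e0} ∪ {y : E | ∃ h : G, (h : Equiv.Perm E) e0 = e0 ∧ (h : Equiv.Perm E) e1 = y}) \ {e0}),
      f e0 e1 a = a ∧ f e0 a e1 = a) ∧
    (∀ a ∈ (({e0} ∪ {y : E | ∃ h : G, (h : Equiv.Perm E) e0 = e0 ∧ (h : Equiv.Perm E) e1 = y}) \ {e0}),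
      ∃ a' ∈ (({e0} ∪ {y : E | ∃ h : G, (h : Equiv.Perm E) e0 = e0 ∧ (h : Equiv.Perm E) e1 = y}) \ {e0}),
        f e0 a a' = e1 ∧ f e0 a' a = e1) := by

  classical
  -- uniqueness of stabilizer elements by two fixed values
  have uniqx : ∀ x : E, ∀ α β : G, (α : Equiv.Perm E) x = x → (β : Equiv.Perm E) x = x →
      (((σ x)⁻¹ * α * σ x : G) : Equiv.Perm E) e1 = (((σ x)⁻¹ * β * σ x : G) : Equiv.Perm E) e1 →
      α = β := by
    intro x α β hαx hβx hconj
    by_contra hne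
    have hg : (β⁻¹ * α : G) ≠ 1 := by
      intro h
      apply hne
      have := congrArg (fun g : G => β * g) h
      simpa [mul_assoc] using this
    have hfix1 : ((β⁻¹ * α : G) : Equiv.Perm E) x = x := by
      simp only [Subgroup.coe_mul, Equiv.Perm.mul_apply, hαx]
      exact (β : Equiv.Perm E).injective (by simp [hβx])
    have hαp : (α : Equiv.Perm E) ((σ x : Equiv.Perm E) e1) = (β : Equiv.Perm E) ((σ x : Equiv.Perm E) e1) := by
      have h2 := hconj
      simp only [Subgroup.coe_mul, Equiv.Perm.mul_apply] at h2
      exact ((((σ x)⁻¹ : G) : Equiv.Perm E)).injective h2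
    have hfix2 : ((β⁻¹ * α : G) : Equiv.Perm E) ((σ x : Equiv.Perm E) e1) = (σ x : Equiv.Perm E) e1 := by
      simp only [Subgroup.coe_mul, Equiv.Perm.mul_apply, hαp]
      simp
    have := hfrob (β⁻¹ * α : G) (by exact (β⁻¹ * α : G).2) (by exact_mod_cast fun h => hg (Subtype.ext h)) x ((σ x : Equiv.Perm E) e1) hfix1 hfix2
    have hx0 : x = (σ x : Equiv.Perm E) e0 := (hσ x).symm
    have : (σ x : Equiv.Perm E) e0 = (σ x : Equiv.Perm E) e1 := by rw [← hx0]; exact this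
    exact h01 ((σ x : Equiv.Perm E).injective this)
  have uniq0 : ∀ h h' : G, (h : Equiv.Perm E) e0 = e0 → (h' : Equiv.Perm E) e0 = e0 →
      (h : Equiv.Perm E) e1 = (h' : Equiv.Perm E) e1 → h = h' := by
    intro h h' h0 h0' h1
    refine uniqx e0 h h' h0 h0' ?_
    simpa [hσ0] using h1
  have hne : ∀ h : G, (h : Equiv.Perm E) e0 = e0 → (h : Equiv.Perm E) e1 ≠ e0 := by
    intro h hh he
    exact h01 ((h : Equiv.Perm E).injective (hh.trans he.symm))
  have hinvσ : ∀ x : E, ((σ x : Equiv.Perm E))⁻¹ x = e0 := fun x =>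
    Equiv.Perm.inv_eq_iff_eq.mpr (hσ x).symm
  -- key existence at any x
  have keyx : ∀ x a, (a = e0 ∨ ∃ h : G, (h : Equiv.Perm E) e0 = e0 ∧ (h : Equiv.Perm E) e1 = a) →
      a ≠ e0 → ∃ α : G, (α : Equiv.Perm E) x = x ∧
        (((σ x)⁻¹ * α * σ x : G) : Equiv.Perm E) e1 = a ∧ ∀ y, f x a y = (α : Equiv.Perm E) y := by
    intro x a ha h0
    by_cases h1 : a = e1
    · subst h1
      exact ⟨1, by simp, by simp, fun y => by simp [hf1]⟩
    · obtain ⟨α, hα1, hα2, _⟩ := hff a ha h0 h1 x x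
      refine ⟨α, hα1, hα2, fun y => ?_⟩
      obtain ⟨β, hβ1, hβ2, hβ3⟩ := hff a ha h0 h1 x y
      rw [hβ3, uniqx x α β hα1 hβ1 (hα2.trans hβ2.symm)]
  have key0 : ∀ a, (a = e0 ∨ ∃ h : G, (h : Equiv.Perm E) e0 = e0 ∧ (h : Equiv.Perm E) e1 = a) →
      a ≠ e0 → ∃ h : G, (h : Equiv.Perm E) e0 = e0 ∧ (h : Equiv.Perm E) e1 = a ∧
        ∀ y, f e0 a y = (h : Equiv.Perm E) y := by
    intro a ha h0
    obtain ⟨α, h1, h2, h3⟩ := keyx e0 a ha h0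
    exact ⟨α, h1, by simpa [hσ0] using h2, h3⟩
  -- evaluation of f e0 via the unique stabilizer element
  have feval : ∀ h : G, (h : Equiv.Perm E) e0 = e0 → ∀ y, f e0 ((h : Equiv.Perm E) e1) y = (h : Equiv.Perm E) y := by
    intro h hh y
    obtain ⟨g, hg0, hg1, hg3⟩ := key0 ((h : Equiv.Perm E) e1) (Or.inr ⟨h, hh, rfl⟩) (hne h hh)
    rw [hg3, uniq0 g h hg0 hh hg1]
  have rep : ∀ a, (a = e0 ∨ ∃ h : G, (h : Equiv.Perm E) e0 = e0 ∧ (h : Equiv.Perm E) e1 = a) →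
      a ≠ e0 → ∃ h : G, (h : Equiv.Perm E) e0 = e0 ∧ (h : Equiv.Perm E) e1 = a :=
    fun a ha h0 => ha.resolve_left h0
  refine ⟨?_, ⟨?_, ?_, ?_⟩, ?_, ?_, ?_, ?_, ?_, ?_⟩
  · -- (1)
    intro a b ha hb ha0 hb0 x y
    obtain ⟨α, hα1, hα2, hα3⟩ := keyx x a ha ha0
    obtain ⟨β, hβ1, hβ2, hβ3⟩ := keyx x b hb hb0
    obtain ⟨hA, hA0, hA1⟩ := rep a ha ha0
    obtain ⟨hB, hB0, hB1⟩ := rep b hb hb0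
    have hc : f e0 a b = ((hA * hB : G) : Equiv.Perm E) e1 := by
      rw [← hA1, feval hA hA0, ← hB1]
      simp [Equiv.Perm.mul_apply]
    have hcmem : f e0 a b = e0 ∨ ∃ h : G, (h : Equiv.Perm E) e0 = e0 ∧ (h : Equiv.Perm E) e1 = f e0 a b :=
      Or.inr ⟨hA * hB, by simp [Equiv.Perm.mul_apply, hA0, hB0], hc.symm⟩
    have hcne : f e0 a b ≠ e0 := by
      rw [hc]
      exact hne _ (by simp [Equiv.Perm.mul_apply, hA0, hB0])
    obtain ⟨γ, hγ1, hγ2, hγ3⟩ := keyx x (f e0 a b) hcmem hcne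
    have hconjα : ((σ x)⁻¹ * α * σ x : G) = hA := by
      refine uniq0 _ _ ?_ hA0 (hα2.trans hA1.symm)
      simp only [Subgroup.coe_mul, Equiv.Perm.mul_apply, hσ, hα1]
      exact hinvσ x
    have hmulconj : ((σ x)⁻¹ * (α * β) * σ x : G)
        = ((σ x)⁻¹ * α * σ x) * ((σ x)⁻¹ * β * σ x) := by group
    have h3 : (((σ x)⁻¹ * (α * β) * σ x : G) : Equiv.Perm E) e1 = f e0 a b :=
      calc (((σ x)⁻¹ * (α * β) * σ x : G) : Equiv.Perm E) e1
          = ((((σ x)⁻¹ * α * σ x) * ((σ x)⁻¹ * β * σ x) : G) : Equiv.Perm E) e1 := by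
            rw [hmulconj]
        _ = (((σ x)⁻¹ * α * σ x : G) : Equiv.Perm E)
              ((((σ x)⁻¹ * β * σ x : G) : Equiv.Perm E) e1) := rfl
        _ = (((σ x)⁻¹ * α * σ x : G) : Equiv.Perm E) b := by rw [hβ2]
        _ = (hA : Equiv.Perm E) b := by rw [hconjα]
        _ = f e0 a b := by rw [← hA1]; exact (feval hA hA0 b).symm
    have hγeq : γ = α * β :=
      uniqx x γ (α * β) hγ1 (by simp [Equiv.Perm.mul_apply, hβ1, hα1])
        (hγ2.trans h3.symm)
    rw [hα3, hβ3, hγ3 y, hγeq]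
    simp [Equiv.Perm.mul_apply]
  · -- MapsTo
    intro h hh
    exact ⟨Or.inr ⟨h, hh, rfl⟩, hne h hh⟩
  · -- InjOn
    intro h hh h' hh' heq
    exact uniq0 h h' hh hh' heq
  · -- SurjOn
    intro y hy
    obtain ⟨h, h0, h1⟩ := rep y hy.1 hy.2
    exact ⟨h, h0, h1⟩
  · -- multiplicativity
    intro h h' hh hh'
    rw [feval h hh]
    simp [Equiv.Perm.mul_apply]
  · -- closure
    rintro a ⟨ha, ha0⟩ b ⟨hb, hb0⟩
    obtain ⟨hA, hA0, hA1⟩ := rep a ha ha0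
    obtain ⟨hB, hB0, hB1⟩ := rep b hb hb0
    have hc : f e0 a b = ((hA * hB : G) : Equiv.Perm E) e1 := by
      rw [← hA1, feval hA hA0, ← hB1]; simp [Equiv.Perm.mul_apply]
    refine ⟨Or.inr ⟨hA * hB, by simp [Equiv.Perm.mul_apply, hA0, hB0], hc.symm⟩, ?_⟩
    rw [hc]
    exact hne _ (by simp [Equiv.Perm.mul_apply, hA0, hB0])
  · -- associativity
    rintro a ⟨ha, ha0⟩ b ⟨hb, hb0⟩ c ⟨hc, hc0⟩
    obtain ⟨hA, hA0, hA1⟩ := rep a ha ha0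
    obtain ⟨hB, hB0, hB1⟩ := rep b hb hb0
    obtain ⟨hC, hC0, hC1⟩ := rep c hc hc0
    have hab : f e0 a b = ((hA * hB : G) : Equiv.Perm E) e1 := by
      rw [← hA1, feval hA hA0, ← hB1]; simp [Equiv.Perm.mul_apply]
    have hbc : f e0 b c = ((hB * hC : G) : Equiv.Perm E) e1 := by
      rw [← hB1, feval hB hB0, ← hC1]; simp [Equiv.Perm.mul_apply]
    rw [hab, hbc, feval (hA * hB) (by simp [Equiv.Perm.mul_apply, hA0, hB0]),
      ← hA1, feval hA hA0, ← hC1]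
    simp [Equiv.Perm.mul_apply]
  · -- e1 in the set
    exact ⟨Or.inr ⟨1, by simp, by simp⟩, Ne.symm h01⟩
  · -- identity laws
    rintro a ⟨ha, ha0⟩
    obtain ⟨hA, hA0, hA1⟩ := rep a ha ha0
    refine ⟨hf1 e0 a, ?_⟩
    rw [← hA1, feval hA hA0]
  · -- inverses
    rintro a ⟨ha, ha0⟩
    obtain ⟨hA, hA0, hA1⟩ := rep a ha ha0
    have hi0 : ((hA⁻¹ : G) : Equiv.Perm E) e0 = e0 := by
      have := congrArg (((hA⁻¹ : G) : Equiv.Perm E)) hA0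
      simpa using this.symm
    refine ⟨((hA⁻¹ : G) : Equiv.Perm E) e1, ⟨Or.inr ⟨hA⁻¹, hi0, rfl⟩, hne _ hi0⟩, ?_, ?_⟩
    · rw [← hA1, feval hA hA0]
      simp
    · rw [feval hA⁻¹ hi0, ← hA1]
      simp
end

section
/- Let b, d ∈ E, let a ∈ E* with a ≠ 0, and let a' ∈ E* \ {0} satisfy (0,a,a') = 1. Then the maps φ_{b,a} : x ↦ (b,a,x) and ψ_{b,a,d} : x ↦ (b, a, (d, a', x)) are bijections of E, and each of them is induced by an element of G (i.e., there exist g, g' ∈ G with g x = (b,a,x) and g' x = (b,a,(d,a',x)) for all x ∈ E). -/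
/-- For `b, d ∈ E`, `a ∈ E*` nonzero, and `a' ∈ E* \ {0}` with
`(0,a,a') = 1`, the maps `φ_{b,a} : x ↦ (b,a,x)` and `ψ_{b,a,d} : x ↦ (b,a,(d,a',x))`
are bijections of `E`, and each is induced by an element of `G`. -/
theorem stmt_6 {E : Type*} [Fintype E] [Nonempty E]
    (G : Subgroup (Equiv.Perm E))
    (htrans : ∀ x y : E, ∃ g ∈ G, g x = y)
    (hirreg : ∃ g ∈ G, g ≠ 1 ∧ ∃ x : E, g x = x)
    (hfrob : ∀ g ∈ G, g ≠ 1 → ∀ x y : E, g x = x → g y = y → x = y)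
    (e0 e1 : E) (h01 : e0 ≠ e1)
    (σ : E → G) (hσ0 : σ e0 = 1) (hσ : ∀ x : E, (σ x : Equiv.Perm E) e0 = x)
    (f : E → E → E → E)
    (hf0 : ∀ x y : E, f x e0 y = x)
    (hf1 : ∀ x y : E, f x e1 y = y)
    (hff : ∀ a : E,
      (a = e0 ∨ ∃ h : G, (h : Equiv.Perm E) e0 = e0 ∧ (h : Equiv.Perm E) e1 = a) →
      a ≠ e0 → a ≠ e1 → ∀ x y : E, ∃ α : G, (α : Equiv.Perm E) x = x ∧
        (((σ x)⁻¹ * α * σ x : G) : Equiv.Perm E) e1 = a ∧ f x a y = (α : Equiv.Perm E) y)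
    (b d : E) (a a' : E)
    (haE : a = e0 ∨ ∃ h : G, (h : Equiv.Perm E) e0 = e0 ∧ (h : Equiv.Perm E) e1 = a)
    (ha0 : a ≠ e0)
    (ha'E : ∃ h : G, (h : Equiv.Perm E) e0 = e0 ∧ (h : Equiv.Perm E) e1 = a')
    (ha'0 : a' ≠ e0)
    (ha' : f e0 a a' = e1) :
    Function.Bijective (fun x : E => f b a x) ∧
    Function.Bijective (fun x : E => f b a (f d a' x)) ∧
    (∃ g ∈ G, ∀ x : E, g x = f b a x) ∧
    (∃ g' ∈ G, ∀ x : E, g' x = f b a (f d a' x)) := by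
  have key : ∀ (c e : E),
      (e = e0 ∨ ∃ h : G, (h : Equiv.Perm E) e0 = e0 ∧ (h : Equiv.Perm E) e1 = e) →
      e ≠ e0 → ∃ g ∈ G, ∀ x : E, g x = f c e x := by
    intro c e hmem he0
    by_cases he1 : e = e1
    · refine ⟨1, G.one_mem, ?_⟩
      intro x
      simp [he1, hf1]
    · obtain ⟨α, hαc, hαe, _⟩ := hff e hmem he0 he1 c e1
      refine ⟨α, α.2, ?_⟩
      intro y
      obtain ⟨β, hβc, hβe, hβy⟩ := hff e hmem he0 he1 c y
      suffices hαβ : (α : Equiv.Perm E) = β by rw [hβy, hαβ]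
      -- uniqueness via Frobenius
      set δ : G := (σ c)⁻¹ * β⁻¹ * α * σ c with hδ
      have hδ0 : (δ : Equiv.Perm E) e0 = e0 := by
        have h1 : (σ c : Equiv.Perm E) e0 = c := hσ c
        have h2 : (β : Equiv.Perm E)⁻¹ c = c := by
          conv_lhs => rw [← hβc]
          simp
        have h3 : (σ c : Equiv.Perm E)⁻¹ c = e0 := by
          exact Equiv.Perm.inv_eq_iff_eq.mpr h1.symm
        simp only [hδ, Subgroup.coe_mul, Equiv.Perm.mul_apply, Subgroup.coe_inv]
        rw [h1, hαc, h2, h3]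
      have hδ1 : (δ : Equiv.Perm E) e1 = e1 := by
        have h1 : (((σ c)⁻¹ * α * σ c : G) : Equiv.Perm E) e1 = e := hαe
        have h2 : (((σ c)⁻¹ * β * σ c : G) : Equiv.Perm E) e1 = e := hβe
        have h3 : (((σ c)⁻¹ * β * σ c : G) : Equiv.Perm E) ((δ : Equiv.Perm E) e1)
            = (((σ c)⁻¹ * α * σ c : G) : Equiv.Perm E) e1 := by
          simp only [hδ, Subgroup.coe_mul, Subgroup.coe_inv, Equiv.Perm.mul_apply]
          simp
        rw [h1, ← h2] at h3
        exact (((σ c)⁻¹ * β * σ c : G) : Equiv.Perm E).injective h3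
      have hδone : (δ : Equiv.Perm E) = 1 := by
        by_contra h
        exact h01 (hfrob (δ : Equiv.Perm E) δ.2 h e0 e1 hδ0 hδ1)
      have : (δ : G) = 1 := by
        ext1; exact hδone
      have : (σ c) * ((σ c)⁻¹ * β⁻¹ * α * σ c) * (σ c)⁻¹ = (σ c) * 1 * (σ c)⁻¹ := by
        rw [← hδ, this]
      have hba : β⁻¹ * α = 1 := by
        group at this
        simpa using this
      have : α = β := by
        have := mul_eq_one_iff_eq_inv.mp hba
        simpa using this.symm
      rw [this]
  obtain ⟨g, hgG, hg⟩ := key b a haE ha0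
  obtain ⟨g', hg'G, hg'⟩ := key d a' (Or.inr ha'E) ha'0
  have hcomp : ∀ x : E, (g * g') x = f b a (f d a' x) := by
    intro x
    rw [Equiv.Perm.mul_apply, hg', hg]
  refine ⟨?_, ?_, ⟨g, hgG, hg⟩, ⟨g * g', G.mul_mem hgG hg'G, hcomp⟩⟩
  · have : (fun x : E => f b a x) = g := by funext x; exact (hg x).symm
    rw [this]; exact g.bijective
  · have : (fun x : E => f b a (f d a' x)) = (g * g') := by
      funext x; exact (hcomp x).symm
    rw [this]; exact (g * g').bijective
end

section
/- Let b ∈ E. The map sending each a ∈ E* \ {0} to the unique α ∈ H_b with (σ_b⁻¹ * α * σ_b) 1 = a is a bijection from E* \ {0} onto H_b; in particular, H_b = {α ∈ G : α b = b and (σ_b⁻¹ * α * σ_b) 1 ∈ E* \ {0}} and card (E* \ {0}) = card H_b. -/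
/-!
Conjugation by `σ_b` carries `H_b` onto `H_0`, and `h ↦ h 1` maps `H_0` injectively onto
`E* \ {0}`: two elements of `H_0` that agree at `1` differ by an element fixing both `0` and `1`,
which is trivial in a Frobenius group. The required map is the inverse of the composite.
-/

theorem Set.BijOn.exists_inverse_bijOn {α β : Type*} [Nonempty α] {f : α → β} {s : Set α}
    {t : Set β} (h : Set.BijOn f s t) :
    ∃ F : β → α, (∀ b ∈ t, F b ∈ s ∧ f (F b) = b ∧ ∀ a ∈ s, f a = b → a = F b) ∧
      Set.BijOn F t s := by
  have hinv := h.invOn_invFunOn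
  have hmaps := h.surjOn.mapsTo_invFunOn
  exact ⟨Function.invFunOn f s, fun b hb => ⟨hmaps hb, hinv.2 hb,
    fun a ha hab => h.injOn ha (hmaps hb) (hab.trans (hinv.2 hb).symm)⟩,
    hinv.symm.bijOn hmaps h.mapsTo⟩

namespace MulAction

variable {G α : Type*} [Group G] [MulAction G α]

theorem bijOn_conj_stabilizer (τ : G) (x : α) :
    Set.BijOn (fun g => τ⁻¹ * g * τ) (stabilizer G (τ • x)) (stabilizer G x) := by
  refine ⟨fun g hg => ?_, fun g _ h _ hgh => by simpa using hgh,
    fun g hg => ⟨τ * g * τ⁻¹, ?_, by simp [mul_assoc]⟩⟩ <;>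
    simp_all [mem_stabilizer_iff, mul_smul]

theorem injOn_smul_stabilizer (hfrob : ∀ g : G, g ≠ 1 → (fixedBy α g).Subsingleton) {x y : α}
    (hxy : x ≠ y) : Set.InjOn (· • y) (stabilizer G x : Set G) := by
  intro g hg h hh hgh
  by_contra hne
  have hx : h⁻¹ * g ∈ stabilizer G x := mul_mem (inv_mem hh) hg
  have hy : (h⁻¹ * g) • y = y := by simp_all [mul_smul, inv_smul_eq_iff]
  exact hxy (hfrob _ (by simpa [inv_mul_eq_one, eq_comm] using hne) hx hy)

theorem union_setOf_diff_eq_image {x y : α} (hxy : x ≠ y) :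
    ({x} ∪ {z | ∃ g : G, g • x = x ∧ g • y = z}) \ {x} = (· • y) '' (stabilizer G x : Set G) := by
  ext z
  constructor
  · rintro ⟨rfl | ⟨g, hg, rfl⟩, hz⟩
    · exact absurd rfl hz
    · exact ⟨g, hg, rfl⟩
  · rintro ⟨g, hg, rfl⟩
    refine ⟨Or.inr ⟨g, hg, rfl⟩, fun hgy => hxy ?_⟩
    exact (smul_left_cancel g (hgy.trans hg.symm)).symm

theorem bijOn_smul_stabilizer (hfrob : ∀ g : G, g ≠ 1 → (fixedBy α g).Subsingleton) {x y : α}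
    (hxy : x ≠ y) :
    Set.BijOn (· • y) (stabilizer G x : Set G)
      (({x} ∪ {z | ∃ g : G, g • x = x ∧ g • y = z}) \ {x}) := by
  rw [union_setOf_diff_eq_image hxy]
  exact (injOn_smul_stabilizer hfrob hxy).bijOn_image

end MulAction

theorem stmt_10_general {E : Type*}
    (G : Subgroup (Equiv.Perm E))
    (hfrob : ∀ g ∈ G, g ≠ 1 → ∀ x y : E, g x = x → g y = y → x = y)
    (e0 e1 : E) (h01 : e0 ≠ e1)
    (σ : E → G) (hσ : ∀ x : E, (σ x : Equiv.Perm E) e0 = x)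
    (b : E) :
    (∃ F : E → G,
      (∀ a ∈ (({e0} ∪ {y : E | ∃ h : G, (h : Equiv.Perm E) e0 = e0 ∧ (h : Equiv.Perm E) e1 = y}) \ {e0}),
        (F a : Equiv.Perm E) b = b ∧
        (((σ b)⁻¹ * F a * σ b : G) : Equiv.Perm E) e1 = a ∧
        ∀ α : G, (α : Equiv.Perm E) b = b →
          (((σ b)⁻¹ * α * σ b : G) : Equiv.Perm E) e1 = a → α = F a) ∧
      Set.BijOn F
        (({e0} ∪ {y : E | ∃ h : G, (h : Equiv.Perm E) e0 = e0 ∧ (h : Equiv.Perm E) e1 = y}) \ {e0})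
        {α : G | (α : Equiv.Perm E) b = b}) ∧
    {α : G | (α : Equiv.Perm E) b = b} =
      {α : G | (α : Equiv.Perm E) b = b ∧
        (((σ b)⁻¹ * α * σ b : G) : Equiv.Perm E) e1 ∈
          (({e0} ∪ {y : E | ∃ h : G, (h : Equiv.Perm E) e0 = e0 ∧ (h : Equiv.Perm E) e1 = y}) \ {e0})} ∧
    Nat.card (({e0} ∪ {y : E | ∃ h : G, (h : Equiv.Perm E) e0 = e0 ∧ (h : Equiv.Perm E) e1 = y}) \ {e0} : Set E) =
      Nat.card {α : G | (α : Equiv.Perm E) b = b} := by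
  have hfrob' : ∀ g : G, g ≠ 1 → (MulAction.fixedBy E g).Subsingleton :=
    fun g hg x hx y hy => hfrob g g.2 (by exact_mod_cast hg) x y hx hy
  have hconj := MulAction.bijOn_conj_stabilizer (σ b) e0
  rw [show σ b • e0 = b from hσ b] at hconj
  have hbij := (MulAction.bijOn_smul_stabilizer hfrob' h01).comp hconj
  obtain ⟨F, hF, hFbij⟩ := hbij.exists_inverse_bijOn
  exact ⟨⟨F, hF, hFbij⟩, Set.ext fun α => ⟨fun hα => ⟨hα, hbij.mapsTo hα⟩, And.left⟩,
    Nat.card_congr (hbij.equiv _).symm⟩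

/-- For `b ∈ E`, the map sending each `a ∈ E* \ {0}` to the unique
`α ∈ H_b` with `(σ_b⁻¹ * α * σ_b) 1 = a` is a bijection from `E* \ {0}` onto `H_b`;
in particular `H_b = {α ∈ G : α b = b ∧ (σ_b⁻¹ * α * σ_b) 1 ∈ E* \ {0}}` and
`card (E* \ {0}) = card H_b`. -/
theorem stmt_10 {E : Type*} [Fintype E] [Nonempty E]
    (G : Subgroup (Equiv.Perm E))
    (htrans : ∀ x y : E, ∃ g ∈ G, g x = y)
    (hirreg : ∃ g ∈ G, g ≠ 1 ∧ ∃ x : E, g x = x)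
    (hfrob : ∀ g ∈ G, g ≠ 1 → ∀ x y : E, g x = x → g y = y → x = y)
    (e0 e1 : E) (h01 : e0 ≠ e1)
    (σ : E → G) (hσ0 : σ e0 = 1) (hσ : ∀ x : E, (σ x : Equiv.Perm E) e0 = x)
    (b : E) :
    (∃ F : E → G,
      (∀ a ∈ (({e0} ∪ {y : E | ∃ h : G, (h : Equiv.Perm E) e0 = e0 ∧ (h : Equiv.Perm E) e1 = y}) \ {e0}),
        (F a : Equiv.Perm E) b = b ∧
        (((σ b)⁻¹ * F a * σ b : G) : Equiv.Perm E) e1 = a ∧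
        ∀ α : G, (α : Equiv.Perm E) b = b →
          (((σ b)⁻¹ * α * σ b : G) : Equiv.Perm E) e1 = a → α = F a) ∧
      Set.BijOn F
        (({e0} ∪ {y : E | ∃ h : G, (h : Equiv.Perm E) e0 = e0 ∧ (h : Equiv.Perm E) e1 = y}) \ {e0})
        {α : G | (α : Equiv.Perm E) b = b}) ∧
    {α : G | (α : Equiv.Perm E) b = b} =
      {α : G | (α : Equiv.Perm E) b = b ∧
        (((σ b)⁻¹ * α * σ b : G) : Equiv.Perm E) e1 ∈
          (({e0} ∪ {y : E | ∃ h : G, (h : Equiv.Perm E) e0 = e0 ∧ (h : Equiv.Perm E) e1 = y}) \ {e0})} ∧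
    Nat.card (({e0} ∪ {y : E | ∃ h : G, (h : Equiv.Perm E) e0 = e0 ∧ (h : Equiv.Perm E) e1 = y}) \ {e0} : Set E) =
      Nat.card {α : G | (α : Equiv.Perm E) b = b} :=
  stmt_10_general G hfrob e0 e1 h01 σ hσ b
end

section
/- The number of fixed-point-free elements of G (i.e., elements g ∈ G with g x ≠ x for every x ∈ E) is exactly n − 1, where n = card E. -/
open Finset

/-- A finite Frobenius group `G` of degree `n = card E` contains exactly
`n - 1` fixed-point-free elements. -/
theorem stmt_11 {E : Type*} [Fintype E] [Nonempty E]
    (G : Subgroup (Equiv.Perm E))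
    (htrans : ∀ x y : E, ∃ g ∈ G, g x = y)
    (hirreg : ∃ g ∈ G, g ≠ 1 ∧ ∃ x : E, g x = x)
    (hfrob : ∀ g ∈ G, g ≠ 1 → ∀ x y : E, g x = x → g y = y → x = y) :
    Nat.card {g : G | ∀ x : E, (g : Equiv.Perm E) x ≠ x} = Fintype.card E - 1 := by
  classical
  obtain ⟨x0⟩ := ‹Nonempty E›
  set n := Fintype.card E with hn
  have hn1 : 1 ≤ n := Fintype.card_pos
  -- stabilizer finsets
  set st : E → Finset G := fun y => univ.filter fun g : G => (g : Equiv.Perm E) y = y with hstdef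
  set k := (st x0).card with hk
  have hone : ∀ y : E, (1 : G) ∈ st y := by
    intro y; simp [st]
  -- all stabilizers have card k
  have hst : ∀ y : E, (st y).card = k := by
    intro y
    obtain ⟨h, hG, hxy⟩ := htrans x0 y
    set H : G := ⟨h, hG⟩ with hH
    rw [hk]
    have hinv : h⁻¹ y = x0 := by rw [Equiv.Perm.inv_eq_iff_eq, hxy]
    apply Finset.card_bij' (fun g _ => H⁻¹ * g * H) (fun g _ => H * g * H⁻¹)
    · intro g hg
      simp only [st, mem_filter, mem_univ, true_and] at hg ⊢
      simp only [Subgroup.coe_mul, Subgroup.coe_inv, Equiv.Perm.mul_apply, hH]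
      rw [hxy, hg, hinv]
    · intro g hg
      simp only [st, mem_filter, mem_univ, true_and] at hg ⊢
      simp only [Subgroup.coe_mul, Subgroup.coe_inv, Equiv.Perm.mul_apply, hH]
      rw [hinv, hg, hxy]
    · intro g hg; group
    · intro g hg; group
  have hk1 : 1 ≤ k := by
    rw [hk]; exact Finset.card_pos.mpr ⟨1, hone x0⟩
  -- orbit-stabilizer: card G = n * k
  have horb : (univ : Finset G).card = n * k := by
    rw [Finset.card_eq_sum_card_fiberwise
      (f := fun g : G => (g : Equiv.Perm E) x0) (t := univ) (fun g _ => mem_univ _)]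
    have hfib : ∀ y : E, (univ.filter fun g : G => (g : Equiv.Perm E) x0 = y).card = k := by
      intro y
      obtain ⟨h, hG, hxy⟩ := htrans x0 y
      set H : G := ⟨h, hG⟩ with hH
      rw [← hst x0]
      apply Finset.card_bij' (fun g _ => H⁻¹ * g) (fun g _ => H * g)
      · intro g hg
        simp only [mem_filter, mem_univ, true_and] at hg
        simp only [st, mem_filter, mem_univ, true_and,
          Subgroup.coe_mul, Subgroup.coe_inv, Equiv.Perm.mul_apply, hH, hg]
        rw [Equiv.Perm.inv_eq_iff_eq, hxy]
      · intro g hg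
        simp only [st, mem_filter, mem_univ, true_and] at hg
        simp only [mem_filter, mem_univ, true_and,
          Subgroup.coe_mul, Equiv.Perm.mul_apply, hH, hg, hxy]
      · intro g hg; group
      · intro g hg; group
    rw [Finset.sum_congr rfl fun y _ => hfib y, Finset.sum_const, smul_eq_mul,
      Finset.card_univ]
  -- elements with a fixed point
  set A : Finset G := univ.filter fun g : G => ∃ x : E, (g : Equiv.Perm E) x = x with hA
  have hAcard : A.card = 1 + n * (k - 1) := by
    have hdecomp : A = insert (1 : G)
        (univ.biUnion fun x : E =>
          univ.filter fun g : G => g ≠ 1 ∧ (g : Equiv.Perm E) x = x) := by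
      ext g
      simp only [hA, mem_filter, mem_univ, true_and, mem_insert, mem_biUnion]
      constructor
      · rintro ⟨x, hx⟩
        by_cases hg : g = 1
        · exact Or.inl hg
        · exact Or.inr ⟨x, hg, hx⟩
      · rintro (rfl | ⟨x, -, hx⟩)
        · exact ⟨x0, by simp⟩
        · exact ⟨x, hx⟩
    have hinner : ∀ y : E, (univ.filter fun g : G => g ≠ 1 ∧ (g : Equiv.Perm E) y = y).card
        = k - 1 := by
      intro y
      have : (univ.filter fun g : G => g ≠ 1 ∧ (g : Equiv.Perm E) y = y)
          = (st y).erase 1 := by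
        ext g
        simp only [mem_filter, mem_univ, true_and, mem_erase, st]
        try tauto
      rw [this, Finset.card_erase_of_mem (hone y), hst y]
    have hdisj : ∀ x ∈ (univ : Finset E), ∀ y ∈ (univ : Finset E), x ≠ y →
        Disjoint (univ.filter fun g : G => g ≠ 1 ∧ (g : Equiv.Perm E) x = x)
          (univ.filter fun g : G => g ≠ 1 ∧ (g : Equiv.Perm E) y = y) := by
      intro x _ y _ hxy
      simp only [Finset.disjoint_left, mem_filter, mem_univ, true_and]
      rintro g ⟨hg1, hgx⟩ ⟨-, hgy⟩
      have hgne : (g : Equiv.Perm E) ≠ 1 := by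
        simpa using (fun h => hg1 (by ext1; simpa using h))
      exact hxy (hfrob g g.2 hgne x y hgx hgy)
    have hnm : (1 : G) ∉ univ.biUnion fun x : E =>
        univ.filter fun g : G => g ≠ 1 ∧ (g : Equiv.Perm E) x = x := by
      simp only [mem_biUnion, mem_filter, mem_univ, true_and, not_exists]
      intro x
      tauto
    rw [hdecomp, Finset.card_insert_of_notMem hnm, Finset.card_biUnion hdisj,
      Finset.sum_congr rfl fun y _ => hinner y, Finset.sum_const, smul_eq_mul,
      Finset.card_univ]
    rw [hn]
    omega
  -- fixed point free elements
  have hsplit : A.card +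
      (univ.filter fun g : G => ∀ x : E, (g : Equiv.Perm E) x ≠ x).card
      = (univ : Finset G).card := by
    rw [hA]
    have : (univ.filter fun g : G => ∀ x : E, (g : Equiv.Perm E) x ≠ x)
        = univ.filter fun g : G => ¬ ∃ x : E, (g : Equiv.Perm E) x = x := by
      apply Finset.filter_congr
      intro g _
      push_neg
      rfl
    rw [this]
    exact Finset.card_filter_add_card_filter_not _
  have hmain : Nat.card {g : G | ∀ x : E, (g : Equiv.Perm E) x ≠ x}
      = (univ.filter fun g : G => ∀ x : E, (g : Equiv.Perm E) x ≠ x).card := by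
    rw [Nat.card_eq_fintype_card, Fintype.card_subtype]
    rfl
  rw [hmain]
  rw [horb, hAcard] at hsplit
  rw [hn] at hsplit
  have hmul : Fintype.card E * k = Fintype.card E * (k - 1) + Fintype.card E := by
    have h1 : k - 1 + 1 = k := by omega
    calc Fintype.card E * k = Fintype.card E * (k - 1 + 1) := by rw [h1]
      _ = Fintype.card E * (k - 1) + Fintype.card E := by ring
  obtain ⟨m, hm⟩ : ∃ m, Fintype.card E * (k - 1) = m := ⟨_, rfl⟩
  rw [hm] at hsplit hmul
  rw [hmul] at hsplit
  omega
end
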